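/- (Exchange relation.) In the depth-2 Jones tower setup, let b ∈ B and let (b₁⁽ⁱ⁾, b₂⁽ⁱ⁾)_{i=1,…,m} be any finite family of pairs of elements of B satisfying ∑ᵢ F(a e₂ e₁ b₁⁽ⁱ⁾) F(a' e₂ e₁ b₂⁽ⁱ⁾) = λ² F(a a' e₂ e₁ b) for all a, a' ∈ A (i.e., ∑ᵢ b₁⁽ⁱ⁾ ⊗ b₂⁽ⁱ⁾ represents the comultiplication Δ(b) determined by the non-degenerate pairing ⟨a,b⟩ = λ⁻²F(a e₂ e₁ b)). Then for every y ∈ M₁: y b = λ⁻¹ ∑ᵢ b₂⁽ⁱ⁾ E_{M₁}(e₂ y b₁⁽ⁱ⁾). -/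

import Mathlib

/-!
Both sides are `k`-linear in `y`, and for `y = m e₁ m'` with `m, m' ∈ M` they arise from the case
`y = e₁` by multiplying by `m` on the left and by `m'` on the right (`e₂`, `b`, `b₁⁽ⁱ⁾`, `b₂⁽ⁱ⁾`
commute with `M`). Since these elements span `M₁`, it suffices to treat `y = e₁`.

By the depth-2 dual bases, elements of `M₂` are separated by the functionals
`x ↦ E_M(a E_{M₁}(v x))` with `a ∈ A`, `v ∈ B`. For `v ∈ B` the element
`a_v = λ⁻³ E_{M₁}(v e₁ e₂) ∈ A` (`fourier v`) satisfies `F(a_v e₂ e₁ c) = E_{M₁}(v c)` for `c ∈ B`: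
the Jones relations give `E_{M₁}(v e₁ c) = λ a_v E_{M₁}(e₂ e₁ c)`, and the Pimsner–Popa identity
`∑ⱼ xⱼ e₁ yⱼ = 1` gives `E_M E_{M₁}(v e₁ c) = λ E_{M₁}(v c)`. Hence the functional takes the value
`λ⁻¹ ∑ᵢ F(a e₂ e₁ b₁⁽ⁱ⁾) F(a_v e₂ e₁ b₂⁽ⁱ⁾)` on the right-hand side and `λ F(a a_v e₂ e₁ b)` on
`e₁ b`, and these agree by the assumption on `Δ(b)`.
-/

open scoped TensorProduct

/-- The depth-2 Jones tower setup: a tower `N ⊆ M ⊆ M₁ ⊆ R` (with `R` playing the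
role of `M₂`) of unital `k`-algebras, with conditional expectations, Jones idempotents,
braid-like relations and depth-2 orthogonal dual bases, as in the paper. -/
structure JonesTower (k : Type*) [Field k] (R : Type*) [Ring R] [Algebra k R] where
  N : Subalgebra k R
  M : Subalgebra k R
  M₁ : Subalgebra k R
  hNM : N ≤ M
  hMM₁ : M ≤ M₁
  lam : k
  hlam : lam ≠ 0
  E : R →ₗ[k] R
  EM : R →ₗ[k] R
  EM1 : R →ₗ[k] R
  hE_mem : ∀ m ∈ M, E m ∈ N
  hEM_mem : ∀ x ∈ M₁, EM x ∈ M
  hEM1_mem : ∀ x : R, EM1 x ∈ M₁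
  hE_one : E 1 = 1
  hEM_one : EM 1 = 1
  hEM1_one : EM1 1 = 1
  hE_bimod : ∀ n ∈ N, ∀ n' ∈ N, ∀ m ∈ M, E (n * m * n') = n * E m * n'
  hEM_bimod : ∀ m ∈ M, ∀ m' ∈ M, ∀ x ∈ M₁, EM (m * x * m') = m * EM x * m'
  hEM1_bimod : ∀ w ∈ M₁, ∀ w' ∈ M₁, ∀ x : R, EM1 (w * x * w') = w * EM1 x * w'
  n₀ : ℕ
  xb : Fin n₀ → R
  yb : Fin n₀ → R
  hxb : ∀ i, xb i ∈ M
  hyb : ∀ i, yb i ∈ M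
  hE_dual₁ : ∀ m ∈ M, ∑ i, E (m * xb i) * yb i = m
  hE_dual₂ : ∀ m ∈ M, ∑ i, xb i * E (yb i * m) = m
  hE_index : ∑ i, xb i * yb i = lam⁻¹ • (1 : R)
  hCMN : ∀ c ∈ M, (∀ n ∈ N, c * n = n * c) → ∃ μ : k, c = μ • (1 : R)
  hCM₁M : ∀ c ∈ M₁, (∀ m ∈ M, c * m = m * c) → ∃ μ : k, c = μ • (1 : R)
  hCM₂M₁ : ∀ c : R, (∀ w ∈ M₁, c * w = w * c) → ∃ μ : k, c = μ • (1 : R)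
  e₁ : R
  e₂ : R
  he₁ : e₁ ∈ M₁
  he₁N : ∀ n ∈ N, e₁ * n = n * e₁
  he₂M : ∀ m ∈ M, e₂ * m = m * e₂
  he₁me₁ : ∀ m ∈ M, e₁ * m * e₁ = E m * e₁
  he₂we₂ : ∀ w ∈ M₁, e₂ * w * e₂ = EM w * e₂
  hEMe₁ : EM e₁ = lam • (1 : R)
  hEM1e₂ : EM1 e₂ = lam • (1 : R)
  hspanM₁ : Subalgebra.toSubmodule M₁ =
    Submodule.span k {x : R | ∃ m ∈ M, ∃ m' ∈ M, x = m * e₁ * m'}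
  hspanM₂ : (⊤ : Submodule k R) =
    Submodule.span k {x : R | ∃ w ∈ M₁, ∃ w' ∈ M₁, x = w * e₂ * w'}
  hbraid₁ : e₁ * e₂ * e₁ = lam • e₁
  hbraid₂ : e₂ * e₁ * e₂ = lam • e₂
  r : ℕ
  zb : Fin r → R
  wb : Fin r → R
  hzbM₁ : ∀ i, zb i ∈ M₁
  hwbM₁ : ∀ i, wb i ∈ M₁
  hzbN : ∀ i, ∀ n ∈ N, zb i * n = n * zb i
  hwbN : ∀ i, ∀ n ∈ N, wb i * n = n * wb i
  hzw_orth : ∀ i j, EM (wb i * zb j) = if i = j then (1 : R) else 0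
  hzw_dual₁ : ∀ x ∈ M₁, ∑ i, EM (x * zb i) * wb i = x
  hzw_dual₂ : ∀ x ∈ M₁, ∑ i, zb i * EM (wb i * x) = x
  hzw_index : ∑ i, zb i * wb i = lam⁻¹ • (1 : R)
  s : ℕ
  ub : Fin s → R
  vb : Fin s → R
  hubM : ∀ i, ∀ m ∈ M, ub i * m = m * ub i
  hvbM : ∀ i, ∀ m ∈ M, vb i * m = m * vb i
  huv_orth : ∀ i j, EM1 (vb i * ub j) = if i = j then (1 : R) else 0
  huv_dual₁ : ∀ x : R, ∑ i, EM1 (x * ub i) * vb i = x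
  huv_dual₂ : ∀ x : R, ∑ i, ub i * EM1 (vb i * x) = x
  huv_index : ∑ i, ub i * vb i = lam⁻¹ • (1 : R)
  F : R →ₗ[k] k
  hF : ∀ c : R, (∀ n ∈ N, c * n = n * c) → algebraMap k R (F c) = EM (EM1 c)

variable {k : Type*} [Field k] {R : Type*} [Ring R] [Algebra k R]

/-- The second centralizer `A = C_{M₁}(N)`. -/
def JonesTower.A (T : JonesTower k R) : Subalgebra k R :=
  T.M₁ ⊓ Subalgebra.centralizer k (T.N : Set R)

/-- The second centralizer `B = C_{M₂}(M)`. -/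
def JonesTower.B (T : JonesTower k R) : Subalgebra k R :=
  Subalgebra.centralizer k (T.M : Set R)

/-- The big centralizer `C = C_{M₂}(N)`. -/
def JonesTower.C (T : JonesTower k R) : Subalgebra k R :=
  Subalgebra.centralizer k (T.N : Set R)

namespace JonesTower

variable (T : JonesTower k R)

lemma EM1_mul_left {w : R} (hw : w ∈ T.M₁) (x : R) : T.EM1 (w * x) = w * T.EM1 x := by
  simpa using T.hEM1_bimod w hw 1 (one_mem _) x

lemma EM1_mul_right (x : R) {w : R} (hw : w ∈ T.M₁) : T.EM1 (x * w) = T.EM1 x * w := by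
  simpa using T.hEM1_bimod 1 (one_mem _) w hw x

lemma EM_mul_left {m x : R} (hm : m ∈ T.M) (hx : x ∈ T.M₁) : T.EM (m * x) = m * T.EM x := by
  simpa using T.hEM_bimod m hm 1 (one_mem _) x hx

lemma EM_mul_right {x m : R} (hx : x ∈ T.M₁) (hm : m ∈ T.M) : T.EM (x * m) = T.EM x * m := by
  simpa using T.hEM_bimod 1 (one_mem _) m hm x hx

lemma mem_C_iff {x : R} : x ∈ T.C ↔ ∀ n ∈ T.N, x * n = n * x := by
  simp only [JonesTower.C, Subalgebra.mem_centralizer_iff, SetLike.mem_coe]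
  exact forall₂_congr fun _ _ => eq_comm

lemma mem_B_iff {x : R} : x ∈ T.B ↔ ∀ m ∈ T.M, x * m = m * x := by
  simp only [JonesTower.B, Subalgebra.mem_centralizer_iff, SetLike.mem_coe]
  exact forall₂_congr fun _ _ => eq_comm

lemma mem_A_iff {x : R} : x ∈ T.A ↔ x ∈ T.M₁ ∧ x ∈ T.C := Algebra.mem_inf

lemma A_le_C : T.A ≤ T.C := fun _ hx => (T.mem_A_iff.1 hx).2

lemma B_le_C : T.B ≤ T.C := Subalgebra.centralizer_le k _ _ T.hNM

lemma e₁_mem_A : T.e₁ ∈ T.A := T.mem_A_iff.2 ⟨T.he₁, T.mem_C_iff.2 T.he₁N⟩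

lemma e₂_mem_C : T.e₂ ∈ T.C := T.mem_C_iff.2 fun n hn => T.he₂M n (T.hNM hn)

lemma e₂_mul_e₁_mul_mem_C {c : R} (hc : c ∈ T.C) : T.e₂ * T.e₁ * c ∈ T.C :=
  mul_mem (mul_mem T.e₂_mem_C (T.A_le_C T.e₁_mem_A)) hc

lemma EM1_mem_A {x : R} (hx : x ∈ T.C) : T.EM1 x ∈ T.A := by
  refine T.mem_A_iff.2 ⟨T.hEM1_mem x, T.mem_C_iff.2 fun n hn => ?_⟩
  have hn₁ : n ∈ T.M₁ := T.hMM₁ (T.hNM hn)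
  rw [← T.EM1_mul_right x hn₁, T.mem_C_iff.1 hx n hn, T.EM1_mul_left hn₁]

lemma exists_EM_eq_smul_one {a : R} (ha : a ∈ T.A) : ∃ η : k, T.EM a = η • (1 : R) := by
  obtain ⟨haM₁, haC⟩ := T.mem_A_iff.1 ha
  refine T.hCMN _ (T.hEM_mem a haM₁) fun n hn => ?_
  rw [← T.EM_mul_right haM₁ (T.hNM hn), T.mem_C_iff.1 haC n hn, T.EM_mul_left (T.hNM hn) haM₁]

lemma algebraMap_F_eq {c : R} (hc : c ∈ T.C) : algebraMap k R (T.F c) = T.EM (T.EM1 c) :=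
  T.hF c (T.mem_C_iff.1 hc)

lemma EM_mul_EM1 {a c : R} (ha : a ∈ T.A) (hc : c ∈ T.C) :
    T.EM (a * T.EM1 c) = algebraMap k R (T.F (a * c)) := by
  rw [T.algebraMap_F_eq (mul_mem (T.A_le_C ha) hc), T.EM1_mul_left (T.mem_A_iff.1 ha).1]

lemma eq_of_forall_EM_wb_mul_eq {x y : R} (hx : x ∈ T.M₁) (hy : y ∈ T.M₁)
    (h : ∀ j, T.EM (T.wb j * x) = T.EM (T.wb j * y)) : x = y := by
  rw [← T.hzw_dual₂ x hx, ← T.hzw_dual₂ y hy]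
  simp only [h]

lemma eq_of_forall_EM1_vb_mul_eq {x y : R} (h : ∀ q, T.EM1 (T.vb q * x) = T.EM1 (T.vb q * y)) :
    x = y := by
  rw [← T.huv_dual₂ x, ← T.huv_dual₂ y]
  simp only [h]

lemma vb_mem_B (q : Fin T.s) : T.vb q ∈ T.B := T.mem_B_iff.2 (T.hvbM q)

lemma wb_mem_A (j : Fin T.r) : T.wb j ∈ T.A :=
  T.mem_A_iff.2 ⟨T.hwbM₁ j, T.mem_C_iff.2 (T.hwbN j)⟩

lemma eq_of_forall_eq_e₂ {f g : R →ₗ[k] R}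
    (h : ∀ w ∈ T.M₁, ∀ w' ∈ T.M₁, f (w * T.e₂ * w') = g (w * T.e₂ * w')) : f = g :=
  LinearMap.ext_on T.hspanM₂.symm (by rintro _ ⟨w, hw, w', hw', rfl⟩; exact h w hw w' hw')

lemma eq_of_forall_eq_e₁ {f g : R →ₗ[k] R}
    (h : ∀ m ∈ T.M, ∀ m' ∈ T.M, f (m * T.e₁ * m') = g (m * T.e₁ * m')) {y : R}
    (hy : y ∈ T.M₁) : f y = g y := by
  have hy' : y ∈ Submodule.span k {x : R | ∃ m ∈ T.M, ∃ m' ∈ T.M, x = m * T.e₁ * m'} := by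
    rw [← T.hspanM₁]
    exact hy
  exact LinearMap.eqOn_span (by rintro _ ⟨m, hm, m', hm', rfl⟩; exact h m hm m' hm') hy'

lemma e₂_mul_eq (y : R) : T.e₂ * y = T.lam⁻¹ • (T.e₂ * T.EM1 (T.e₂ * y)) := by
  suffices LinearMap.mulLeft k T.e₂ =
      T.lam⁻¹ • (LinearMap.mulLeft k T.e₂ ∘ₗ T.EM1 ∘ₗ LinearMap.mulLeft k T.e₂) by
    simpa using LinearMap.congr_fun this y
  refine T.eq_of_forall_eq_e₂ fun w hw w' hw' => ?_
  have hEw : T.EM w ∈ T.M := T.hEM_mem w hw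
  have he₂w : T.e₂ * (w * T.e₂ * w') = T.EM w * T.e₂ * w' := by
    rw [← T.he₂we₂ w hw]
    simp only [mul_assoc]
  simp only [LinearMap.smul_apply, LinearMap.comp_apply, LinearMap.mulLeft_apply, he₂w,
    T.hEM1_bimod _ (T.hMM₁ hEw) _ hw', T.hEM1e₂, mul_smul_comm, mul_one, ← mul_assoc,
    T.he₂M _ hEw]
  rw [smul_mul_assoc, smul_smul, inv_mul_cancel₀ T.hlam, one_smul]

lemma EM1_mul_e₂_mul (x y : R) :
    T.EM1 (x * T.e₂ * y) = T.lam⁻¹ • (T.EM1 (x * T.e₂) * T.EM1 (T.e₂ * y)) := by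
  conv_lhs => rw [mul_assoc, T.e₂_mul_eq y, mul_smul_comm, map_smul, ← mul_assoc,
    T.EM1_mul_right _ (T.hEM1_mem _)]

lemma EM1_mul_e₁_e₂_mul_EM1 (v c : R) :
    T.EM1 (v * T.e₁ * T.e₂) * T.EM1 (T.e₂ * T.e₁ * c) = T.lam ^ 2 • T.EM1 (v * T.e₁ * c) := by
  have h := T.EM1_mul_e₂_mul (v * T.e₁) (T.e₁ * c)
  rw [show v * T.e₁ * T.e₂ * (T.e₁ * c) = v * (T.e₁ * T.e₂ * T.e₁) * c by simp only [mul_assoc],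
    T.hbraid₁, mul_smul_comm, smul_mul_assoc, map_smul, ← mul_assoc,
    eq_inv_smul_iff₀ T.hlam, smul_smul, ← pow_two] at h
  exact h.symm

lemma sum_xb_mul_mul_yb_commute {a m : R} (ha : a ∈ T.C) (hm : m ∈ T.M) :
    m * ∑ j, T.xb j * a * T.yb j = (∑ j, T.xb j * a * T.yb j) * m := by
  have hmx : ∀ j, m * T.xb j = ∑ l, T.xb l * T.E (T.yb l * m * T.xb j) := fun j => by
    simpa only [mul_assoc] using (T.hE_dual₂ _ (mul_mem hm (T.hxb j))).symm
  have hym : ∀ l, T.yb l * m = ∑ j, T.E (T.yb l * m * T.xb j) * T.yb j := fun l =>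
    (T.hE_dual₁ _ (mul_mem (T.hyb l) hm)).symm
  have hEa : ∀ l j, a * T.E (T.yb l * m * T.xb j) = T.E (T.yb l * m * T.xb j) * a := fun l j =>
    T.mem_C_iff.1 ha _ (T.hE_mem _ (mul_mem (mul_mem (T.hyb l) hm) (T.hxb j)))
  calc m * ∑ j, T.xb j * a * T.yb j
      = ∑ j, ∑ l, T.xb l * a * (T.E (T.yb l * m * T.xb j) * T.yb j) := by
        refine Finset.mul_sum _ _ _ |>.trans (Finset.sum_congr rfl fun j _ => ?_)
        rw [← mul_assoc, ← mul_assoc, hmx j, Finset.sum_mul, Finset.sum_mul]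
        refine Finset.sum_congr rfl fun l _ => ?_
        rw [mul_assoc (T.xb l), ← hEa]
        simp only [mul_assoc]
    _ = ∑ l, T.xb l * a * (T.yb l * m) := by
        rw [Finset.sum_comm]
        exact Finset.sum_congr rfl fun l _ => by rw [← Finset.mul_sum, ← hym l]
    _ = (∑ j, T.xb j * a * T.yb j) * m := by
        rw [Finset.sum_mul]
        simp only [mul_assoc]

lemma sum_xb_mul_mul_yb {a : R} (ha : a ∈ T.A) :
    ∑ j, T.xb j * a * T.yb j = T.lam⁻¹ • T.EM a := by
  obtain ⟨haM₁, haC⟩ := T.mem_A_iff.1 ha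
  obtain ⟨η, hη⟩ := T.exists_EM_eq_smul_one ha
  set Y := ∑ j, T.xb j * a * T.yb j
  have hYM₁ : Y ∈ T.M₁ := Subalgebra.sum_mem _ fun j _ =>
    mul_mem (mul_mem (T.hMM₁ (T.hxb j)) haM₁) (T.hMM₁ (T.hyb j))
  obtain ⟨μ, hμ⟩ := T.hCM₁M Y hYM₁ fun m hm => (T.sum_xb_mul_mul_yb_commute haC hm).symm
  have hEY : T.EM Y = Y := by rw [hμ, map_smul, T.hEM_one]
  have hEY' : T.EM Y = η • ∑ j, T.xb j * T.yb j := by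
    simp only [Y, map_sum, T.hEM_bimod _ (T.hxb _) _ (T.hyb _) _ haM₁, hη, Finset.smul_sum,
      mul_smul_comm, smul_mul_assoc, mul_one]
  rw [← hEY, hEY', T.hE_index, hη, smul_comm]

lemma sum_xb_mul_e₁_mul_yb : ∑ j, T.xb j * T.e₁ * T.yb j = 1 := by
  rw [T.sum_xb_mul_mul_yb T.e₁_mem_A, T.hEMe₁, smul_smul, inv_mul_cancel₀ T.hlam, one_smul]

lemma EM_EM1_mul_e₁_mul {v c : R} (hv : v ∈ T.B) (hc : c ∈ T.B) :
    T.EM (T.EM1 (v * T.e₁ * c)) = T.lam • T.EM1 (v * c) := by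
  have htA : T.EM1 (v * T.e₁ * c) ∈ T.A :=
    T.EM1_mem_A (mul_mem (mul_mem (T.B_le_C hv) (T.A_le_C T.e₁_mem_A)) (T.B_le_C hc))
  have hterm : ∀ j, T.xb j * T.EM1 (v * T.e₁ * c) * T.yb j =
      T.EM1 (v * (T.xb j * T.e₁ * T.yb j) * c) := fun j => by
    rw [← T.EM1_mul_left (T.hMM₁ (T.hxb j)), ← T.EM1_mul_right _ (T.hMM₁ (T.hyb j))]
    congr 1
    simp only [← mul_assoc, ← T.mem_B_iff.1 hv _ (T.hxb j)]
    simp only [mul_assoc, T.mem_B_iff.1 hc _ (T.hyb j)]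
  have hsum := T.sum_xb_mul_mul_yb htA
  simp only [hterm, ← map_sum, ← Finset.sum_mul, ← Finset.mul_sum, T.sum_xb_mul_e₁_mul_yb,
    mul_one] at hsum
  rw [hsum, smul_smul, mul_inv_cancel₀ T.hlam, one_smul]

def fourier (v : R) : R := (T.lam ^ 3)⁻¹ • T.EM1 (v * T.e₁ * T.e₂)

lemma fourier_mem_A {v : R} (hv : v ∈ T.B) : T.fourier v ∈ T.A :=
  Subalgebra.smul_mem _ (T.EM1_mem_A (mul_mem (mul_mem (T.B_le_C hv)
    (T.A_le_C T.e₁_mem_A)) T.e₂_mem_C)) _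

lemma EM1_mul_e₁_mul (v c : R) :
    T.EM1 (v * T.e₁ * c) = T.lam • (T.fourier v * T.EM1 (T.e₂ * T.e₁ * c)) := by
  rw [fourier, smul_mul_assoc, T.EM1_mul_e₁_e₂_mul_EM1, smul_smul, smul_smul]
  have : T.lam * (T.lam ^ 3)⁻¹ * T.lam ^ 2 = 1 := by field_simp [T.hlam]
  rw [this, one_smul]

lemma algebraMap_F_fourier_mul {v c : R} (hv : v ∈ T.B) (hc : c ∈ T.B) :
    algebraMap k R (T.F (T.fourier v * T.e₂ * T.e₁ * c)) = T.EM1 (v * c) := by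
  have h := T.EM_EM1_mul_e₁_mul hv hc
  rw [T.EM1_mul_e₁_mul, map_smul,
    T.EM_mul_EM1 (T.fourier_mem_A hv) (T.e₂_mul_e₁_mul_mem_C (T.B_le_C hc))] at h
  simpa only [mul_assoc] using smul_right_injective R T.hlam h

variable {b : R} {m : ℕ} {b₁ b₂ : Fin m → R}

lemma EM_mul_EM1_mul_e₁_mul {a v c : R} (ha : a ∈ T.A) (hv : v ∈ T.B) (hc : c ∈ T.B) :
    T.EM (a * T.EM1 (v * T.e₁ * c)) =
      algebraMap k R (T.lam * T.F (a * T.fourier v * T.e₂ * T.e₁ * c)) := by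
  rw [T.EM1_mul_e₁_mul, mul_smul_comm, map_smul, ← mul_assoc,
    T.EM_mul_EM1 (mul_mem ha (T.fourier_mem_A hv)) (T.e₂_mul_e₁_mul_mem_C (T.B_le_C hc)),
    Algebra.smul_def, ← map_mul]
  simp only [mul_assoc]

lemma EM_mul_EM1_mul_sum {a v : R} (ha : a ∈ T.A) (hv : v ∈ T.B) (hb₁ : ∀ i, b₁ i ∈ T.B)
    (hb₂ : ∀ i, b₂ i ∈ T.B) :
    T.EM (a * T.EM1 (v * ∑ i, b₂ i * T.EM1 (T.e₂ * T.e₁ * b₁ i))) = algebraMap k R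
      (∑ i, T.F (a * T.e₂ * T.e₁ * b₁ i) * T.F (T.fourier v * T.e₂ * T.e₁ * b₂ i)) := by
  simp only [Finset.mul_sum, map_sum]
  refine Finset.sum_congr rfl fun i _ => ?_
  rw [← mul_assoc, T.EM1_mul_right _ (T.hEM1_mem _), ← T.algebraMap_F_fourier_mul hv (hb₂ i),
    ← Algebra.smul_def, mul_smul_comm, map_smul,
    T.EM_mul_EM1 ha (T.e₂_mul_e₁_mul_mem_C (T.B_le_C (hb₁ i))), Algebra.smul_def, ← map_mul,
    mul_comm]
  simp only [mul_assoc]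

lemma e₁_mul_eq_of_comul (hb : b ∈ T.B) (hb₁ : ∀ i, b₁ i ∈ T.B) (hb₂ : ∀ i, b₂ i ∈ T.B)
    (hΔ : ∀ a ∈ T.A, ∀ a' ∈ T.A,
      ∑ i, T.F (a * T.e₂ * T.e₁ * b₁ i) * T.F (a' * T.e₂ * T.e₁ * b₂ i) =
        T.lam ^ 2 * T.F (a * a' * T.e₂ * T.e₁ * b)) :
    T.e₁ * b = T.lam⁻¹ • ∑ i, b₂ i * T.EM1 (T.e₂ * T.e₁ * b₁ i) := by
  refine T.eq_of_forall_EM1_vb_mul_eq fun q => T.eq_of_forall_EM_wb_mul_eq (T.hEM1_mem _)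
    (T.hEM1_mem _) fun j => ?_
  rw [← mul_assoc, T.EM_mul_EM1_mul_e₁_mul (T.wb_mem_A j) (T.vb_mem_B q) hb, mul_smul_comm,
    map_smul, mul_smul_comm, map_smul, T.EM_mul_EM1_mul_sum (T.wb_mem_A j) (T.vb_mem_B q) hb₁ hb₂,
    hΔ _ (T.wb_mem_A j) _ (T.fourier_mem_A (T.vb_mem_B q)), Algebra.smul_def, ← map_mul]
  congr 1
  field_simp [T.hlam]

lemma mul_eq_of_e₁_mul_eq (hb : b ∈ T.B) (hb₁ : ∀ i, b₁ i ∈ T.B) (hb₂ : ∀ i, b₂ i ∈ T.B)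
    (he₁ : T.e₁ * b = T.lam⁻¹ • ∑ i, b₂ i * T.EM1 (T.e₂ * T.e₁ * b₁ i)) {y : R}
    (hy : y ∈ T.M₁) : y * b = T.lam⁻¹ • ∑ i, b₂ i * T.EM1 (T.e₂ * y * b₁ i) := by
  have key := T.eq_of_forall_eq_e₁ (f := LinearMap.mulRight k b)
    (g := T.lam⁻¹ • ∑ i, LinearMap.mulLeft k (b₂ i) ∘ₗ T.EM1 ∘ₗ LinearMap.mulRight k (b₁ i) ∘ₗ
      LinearMap.mulLeft k T.e₂) ?_ hy
  · simpa using key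
  intro c hc c' hc'
  have hterm : ∀ i, b₂ i * T.EM1 (T.e₂ * (c * T.e₁ * c') * b₁ i) =
      c * (b₂ i * T.EM1 (T.e₂ * T.e₁ * b₁ i)) * c' := fun i => by
    rw [show T.e₂ * (c * T.e₁ * c') * b₁ i = c * (T.e₂ * T.e₁ * b₁ i) * c' by
      simp only [← mul_assoc, T.he₂M c hc]
      simp only [mul_assoc, T.mem_B_iff.1 (hb₁ i) c' hc'],
      T.hEM1_bimod c (T.hMM₁ hc) c' (T.hMM₁ hc'), ← mul_assoc, ← mul_assoc,
      T.mem_B_iff.1 (hb₂ i) c hc]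
    simp only [mul_assoc]
  simp only [LinearMap.mulRight_apply, LinearMap.smul_apply, LinearMap.sum_apply,
    LinearMap.comp_apply, LinearMap.mulLeft_apply]
  rw [Finset.sum_congr rfl fun i _ => hterm i, ← Finset.sum_mul, ← Finset.mul_sum,
    ← smul_mul_assoc, ← mul_smul_comm, ← he₁]
  simp only [mul_assoc, T.mem_B_iff.1 hb c' hc']

end JonesTower

theorem exchange_relation_general (T : JonesTower k R)
    (b : R) (hb : b ∈ T.B) (m : ℕ) (b₁ b₂ : Fin m → R)
    (hb₁ : ∀ i, b₁ i ∈ T.B) (hb₂ : ∀ i, b₂ i ∈ T.B)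
    (hΔ : ∀ a ∈ T.A, ∀ a' ∈ T.A,
      ∑ i, T.F (a * T.e₂ * T.e₁ * b₁ i) * T.F (a' * T.e₂ * T.e₁ * b₂ i) =
        T.lam ^ 2 * T.F (a * a' * T.e₂ * T.e₁ * b)) :
    ∀ y ∈ T.M₁, y * b = T.lam⁻¹ • ∑ i, b₂ i * T.EM1 (T.e₂ * y * b₁ i) := fun _ hy =>
  T.mul_eq_of_e₁_mul_eq hb hb₁ hb₂ (T.e₁_mul_eq_of_comul hb hb₁ hb₂ hΔ) hy

/-- **Exchange relation.** If `b ∈ B` and `∑ᵢ b₁⁽ⁱ⁾ ⊗ b₂⁽ⁱ⁾` represents the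
comultiplication `Δ(b)` determined by the pairing `⟨a, b⟩ = λ⁻² F(a e₂ e₁ b)`
(i.e. `∑ᵢ F(a e₂ e₁ b₁⁽ⁱ⁾) F(a' e₂ e₁ b₂⁽ⁱ⁾) = λ² F(a a' e₂ e₁ b)` for all
`a, a' ∈ A`), then `y b = λ⁻¹ ∑ᵢ b₂⁽ⁱ⁾ E_{M₁}(e₂ y b₁⁽ⁱ⁾)` for every `y ∈ M₁`. -/
theorem exchange_relation (T : JonesTower k R) [Nontrivial R]
    (b : R) (hb : b ∈ T.B) (m : ℕ) (b₁ b₂ : Fin m → R)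
    (hb₁ : ∀ i, b₁ i ∈ T.B) (hb₂ : ∀ i, b₂ i ∈ T.B)
    (hΔ : ∀ a ∈ T.A, ∀ a' ∈ T.A,
      ∑ i, T.F (a * T.e₂ * T.e₁ * b₁ i) * T.F (a' * T.e₂ * T.e₁ * b₂ i) =
        T.lam ^ 2 * T.F (a * a' * T.e₂ * T.e₁ * b)) :
    ∀ y ∈ T.M₁, y * b = T.lam⁻¹ • ∑ i, b₂ i * T.EM1 (T.e₂ * y * b₁ i) :=
  exchange_relation_general T b hb m b₁ b₂ hb₁ hb₂ hΔ
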